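/- Let q = p be an odd prime and let U ⊆ F_p³ be a set of p² − 2 points that does not determine the points of C, is not extendable, and satisfies ∑_{u∈U} u = (0,0,0). Then for every nonzero (y,z,w) ∈ F_p³: σ₂(y,z,w) = 0 if and only if the line at infinity l(y,z,w) is tangent to C. (In other words, the curve σ₂(Y,Z,W) = 0 is the dual of the conic C.) -/

import Mathlib

/-- The dot product on `F³`. -/
def dot3 {F : Type*} [Field F] (u v : F × F × F) : F :=
  u.1 * v.1 + u.2.1 * v.2.1 + u.2.2 * v.2.2

/-- The nondegenerate quadratic form `Q(t₀,t₁,t₂) = t₁² − t₀t₂` defining the conic `C`. -/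
def quadQ {F : Type*} [Field F] (t : F × F × F) : F :=
  t.2.1 ^ 2 - t.1 * t.2.2

/-- `U` does not determine the points of the conic `C`:
`Q(u − u') ≠ 0` for all distinct `u, u' ∈ U`. -/
def NoDetermine {F : Type*} [Field F] (U : Finset (F × F × F)) : Prop :=
  ∀ u ∈ U, ∀ u' ∈ U, u ≠ u' → quadQ (u - u') ≠ 0

/-- The line at infinity `l(y,z,w)` meets the conic `C`. -/
def MeetsConic {F : Type*} [Field F] (v : F × F × F) : Prop :=
  ∃ t : F × F × F, t ≠ 0 ∧ quadQ t = 0 ∧ dot3 v t = 0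

/-- `σ_i(y,z,w)`: the `i`-th elementary symmetric function of the multiset
`{u·(y,z,w) : u ∈ U}`. -/
def sigmaU {F : Type*} [Field F] (U : Finset (F × F × F)) (v : F × F × F) (i : ℕ) : F :=
  (U.val.map (fun u => dot3 u v)).esymm i

/-- The line at infinity `l(y,z,w)` is tangent to the conic `C`. -/
def TangentToConic {F : Type*} [Field F] (v : F × F × F) : Prop :=
  ∃ t : F × F × F, t ≠ 0 ∧ quadQ t = 0 ∧ dot3 v t = 0 ∧
    ∀ t' : F × F × F, t' ≠ 0 → quadQ t' = 0 → dot3 v t' = 0 → ∃ c : F, t' = c • t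

/-!
Project `F³` to `F²` along each of the `p + 1` isotropic directions `d`. No difference of two
points of `U` is isotropic, so `U` projects injectively and misses exactly two points, which are
`±A_d` because both `U` and `F²` sum to zero. A binary quadratic form sums to zero over `F²`, so
its sum over the projection of `U` is `-2` times its value at `A_d`; comparing two directions
through a form that factors through both relates their missing pairs. These relations leave two
possibilities: every missing line lies in the tangent plane of the isotropic cone along its
direction, or some point lies on one missing line of every direction, and then it extends `U`.
In the tangent configuration the second moments of `U` are those of the dual conic,
`∑ (u·v)² = -2 w² (v₁² - 4 v₀ v₂)` with `w ≠ 0`, and `2 σ₂ = (∑ u·v)² - ∑ (u·v)²` with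
`∑ u·v = 0`.
-/

open Finset

section Conic

variable {F : Type*} [Field F]

/-- Projections `F³ → F²` whose kernels are the isotropic lines spanned by `(1, s, s²)` and
`(0, 0, 1)` respectively. -/
def projFin (s : F) : (F × F × F) →+ F × F :=
  AddMonoidHom.mk' (fun u => (s * u.1 - u.2.1, u.2.2 - s * u.2.1))
    (fun a b => by ext <;> simp only [Prod.fst_add, Prod.snd_add] <;> ring)

def projInf : (F × F × F) →+ F × F :=
  AddMonoidHom.mk' (fun u => (u.1, u.2.1)) (fun _ _ => rfl)

@[simp]
lemma projFin_apply (s : F) (u : F × F × F) :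
    projFin s u = (s * u.1 - u.2.1, u.2.2 - s * u.2.1) := rfl

@[simp]
lemma projInf_apply (u : F × F × F) : projInf u = (u.1, u.2.1) := rfl

lemma quadQ_sub_comm (a b : F × F × F) : quadQ (a - b) = quadQ (b - a) := by
  simp only [quadQ, Prod.fst_sub, Prod.snd_sub]; ring

lemma dot3_smul (v t : F × F × F) (c : F) : dot3 v (c • t) = c * dot3 v t := by
  simp only [dot3, Prod.smul_fst, Prod.smul_snd, smul_eq_mul]; ring

lemma dot3_conic (v : F × F × F) (s : F) :
    dot3 v (1, s, s ^ 2) = v.2.2 * (s * s) + v.2.1 * s + v.1 := by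
  simp only [dot3]; ring

lemma sum_dot3_left (U : Finset (F × F × F)) (v : F × F × F) :
    ∑ u ∈ U, dot3 u v = dot3 (∑ u ∈ U, u) v := by
  simp only [dot3, Prod.fst_sum, Prod.snd_sum, sum_add_distrib, sum_mul]

lemma quadQ_conic (s : F) : quadQ ((1, s, s ^ 2) : F × F × F) = 0 := by
  simp [quadQ]

lemma isotropic_cases {t : F × F × F} (ht : quadQ t = 0) :
    (∃ s, t = t.1 • (1, s, s ^ 2)) ∨ t = t.2.2 • (0, 0, 1) := by
  obtain ⟨a, b, c⟩ := t
  simp only [quadQ] at ht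
  rcases eq_or_ne a 0 with rfl | ha
  · right
    have hb : b = 0 := pow_eq_zero_iff two_ne_zero |>.mp (by linear_combination ht)
    simp [hb]
  · left
    refine ⟨b / a, ?_⟩
    simp only [Prod.smul_mk, smul_eq_mul, Prod.mk.injEq]
    refine ⟨(mul_one a).symm, by field_simp, ?_⟩
    field_simp
    linear_combination -ht

lemma quadQ_eq_zero_iff_proj (d : F × F × F) :
    quadQ d = 0 ↔ (∃ s, projFin s d = 0) ∨ projInf d = 0 := by
  refine ⟨fun hd => ?_, ?_⟩
  · rcases isotropic_cases hd with ⟨s, hs⟩ | hs <;> rw [hs]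
    · exact Or.inl ⟨s, by ext <;> simp <;> ring⟩
    · exact Or.inr (by simp)
  · rintro (⟨s, hs⟩ | hs) <;>
      simp only [Prod.ext_iff, projFin_apply, projInf_apply, Prod.fst_zero, Prod.snd_zero] at hs <;>
      simp only [quadQ]
    · linear_combination -d.2.1 * hs.1 - d.1 * hs.2
    · rw [hs.1, hs.2]; ring

lemma isotropic_mem_line_cases {v t : F × F × F} (ht : t ≠ 0) (hq : quadQ t = 0)
    (hv : dot3 v t = 0) :
    (∃ s, t.1 ≠ 0 ∧ t = t.1 • (1, s, s ^ 2) ∧ dot3 v (1, s, s ^ 2) = 0) ∨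
      (v.2.2 = 0 ∧ t = t.2.2 • (0, 0, 1)) := by
  rcases isotropic_cases hq with ⟨s, hs⟩ | hs
  · have h1 : t.1 ≠ 0 := fun h => ht (by rw [hs, h, zero_smul])
    rw [hs, dot3_smul] at hv
    exact Or.inl ⟨s, h1, hs, (mul_eq_zero.mp hv).resolve_left h1⟩
  · have h1 : t.2.2 ≠ 0 := fun h => ht (by rw [hs, h, zero_smul])
    rw [hs, dot3_smul] at hv
    refine Or.inr ⟨?_, hs⟩
    simpa [dot3, h1] using hv

lemma TangentToConic.exists_smul_eq {v : F × F × F} (hv : TangentToConic v)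
    {t t' : F × F × F} (ht : t ≠ 0) (htq : quadQ t = 0) (htv : dot3 v t = 0)
    (ht'q : quadQ t' = 0) (ht'v : dot3 v t' = 0) : ∃ c : F, t' = c • t := by
  by_cases ht' : t' = 0
  · exact ⟨0, by rw [ht', zero_smul]⟩
  obtain ⟨t₀, -, -, -, huniq⟩ := hv
  obtain ⟨a, rfl⟩ := huniq t ht htq htv
  obtain ⟨b, rfl⟩ := huniq t' ht' ht'q ht'v
  have ha : a ≠ 0 := fun h => ht (by rw [h, zero_smul])
  exact ⟨b / a, by rw [smul_smul, div_mul_cancel₀ b ha]⟩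

lemma TangentToConic.eq_of_roots {v : F × F × F} (hv : TangentToConic v) {s s' : F}
    (hs : dot3 v (1, s, s ^ 2) = 0) (hs' : dot3 v (1, s', s' ^ 2) = 0) : s' = s := by
  obtain ⟨c, hc⟩ := hv.exists_smul_eq (by simp) (quadQ_conic s) hs (quadQ_conic s') hs'
  simp only [Prod.smul_mk, smul_eq_mul, Prod.mk.injEq, mul_one] at hc
  rw [hc.2.1, ← hc.1, one_mul]

lemma TangentToConic.discrim_eq_zero {v : F × F × F} (hT : TangentToConic v) :
    discrim v.2.2 v.2.1 v.1 = 0 := by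
  rcases eq_or_ne v.2.2 0 with h22 | h22
  · by_contra hd
    have h21 : v.2.1 ≠ 0 := fun h => hd (by simp [discrim, h, h22])
    have hroot : dot3 v (1, -v.1 / v.2.1, (-v.1 / v.2.1) ^ 2) = 0 := by
      rw [dot3_conic, h22]; field_simp; ring
    obtain ⟨c, hc⟩ := hT.exists_smul_eq (t := (0, 0, 1)) (by simp) (by simp [quadQ])
      (by simp [dot3, h22]) (quadQ_conic _) hroot
    simp at hc
  obtain ⟨t, ht, htq, htv, -⟩ := id hT
  rcases isotropic_mem_line_cases ht htq htv with ⟨s, -, -, hs⟩ | ⟨h, -⟩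
  · have hs' : dot3 v (1, -v.2.1 / v.2.2 - s, (-v.2.1 / v.2.2 - s) ^ 2) = 0 := by
      rw [dot3_conic] at hs ⊢; field_simp; linear_combination v.2.2 * hs
    have hss' := hT.eq_of_roots hs hs'
    field_simp at hss'
    rw [dot3_conic] at hs
    rw [discrim_eq_sq_of_quadratic_eq_zero hs]
    linear_combination -(2 * v.2.2 * s + v.2.1) * hss'
  · exact absurd h h22

lemma tangentToConic_of_discrim_eq_zero (h2 : (2 : F) ≠ 0) {v : F × F × F} (hv : v ≠ 0)
    (hd : discrim v.2.2 v.2.1 v.1 = 0) : TangentToConic v := by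
  have : NeZero (2 : F) := ⟨h2⟩
  rcases eq_or_ne v.2.2 0 with h22 | h22
  · have h21 : v.2.1 = 0 := pow_eq_zero_iff two_ne_zero |>.mp (by simpa [discrim, h22] using hd)
    have h1 : v.1 ≠ 0 := fun h => hv (by ext <;> simp [h, h21, h22])
    refine ⟨(0, 0, 1), by simp, by simp [quadQ], by simp [dot3, h22], fun t ht htq htv => ?_⟩
    rcases isotropic_mem_line_cases ht htq htv with ⟨s, -, -, hs⟩ | ⟨-, hs⟩
    · simp [dot3_conic, h21, h22, h1] at hs
    · exact ⟨_, hs⟩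
  set s₀ := -v.2.1 / (2 * v.2.2)
  have hroot : ∀ s, dot3 v (1, s, s ^ 2) = 0 ↔ s = s₀ := by
    intro s
    rw [dot3_conic, quadratic_eq_zero_iff_discrim_eq_sq h22, hd, eq_comm, sq_eq_zero_iff]
    simp only [s₀]
    constructor <;> intro h <;> field_simp at h ⊢ <;> linear_combination h
  refine ⟨(1, s₀, s₀ ^ 2), by simp, quadQ_conic s₀, (hroot s₀).2 rfl, fun t ht htq htv => ?_⟩
  rcases isotropic_mem_line_cases ht htq htv with ⟨s, -, hts, hs⟩ | ⟨h, -⟩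
  · exact ⟨t.1, by rw [← (hroot s).1 hs]; exact hts⟩
  · exact absurd h h22

theorem tangentToConic_iff_discrim_eq_zero (h2 : (2 : F) ≠ 0) {v : F × F × F} (hv : v ≠ 0) :
    TangentToConic v ↔ discrim v.2.2 v.2.1 v.1 = 0 :=
  ⟨TangentToConic.discrim_eq_zero, tangentToConic_of_discrim_eq_zero h2 hv⟩

end Conic

lemma sum_univ_eq_zero_of_two_ne_zero {F M : Type*} [Field F] [AddCommGroup M] [Module F M]
    [Fintype M] (h2 : (2 : F) ≠ 0) : ∑ m : M, m = 0 := by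
  have hneg : ∑ m : M, m = -∑ m : M, m := by
    rw [← sum_neg_distrib]
    exact (Fintype.sum_equiv (Equiv.neg M) _ _ fun _ => rfl).symm
  have h : (2 : F) • ∑ m : M, m = 0 := by
    rw [two_smul]; nth_rewrite 2 [hneg]; exact add_neg_cancel _
  exact (smul_eq_zero.mp h).resolve_left h2

section MissingPair

variable {V M : Type*} [AddCommGroup V] [AddCommGroup M] [Fintype M] [DecidableEq M]

/-- For `π` the projection along an isotropic direction: `U` meets every line of that direction
except the two lines over `A` and `-A`. -/
structure IsMissingPair (U : Finset V) (π : V →+ M) (A : M) : Prop where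
  injOn : Set.InjOn π U
  ne_neg : A ≠ -A
  compl_image : univ \ U.image π = {A, -A}

variable {U : Finset V} {π : V →+ M} {A : M}

theorem IsMissingPair.exists (hπ : Set.InjOn π U) (hcard : #U + 2 = Fintype.card M)
    (hM : ∑ m : M, m = 0) (hU : ∑ u ∈ U, u = 0) : ∃ A, IsMissingPair U π A := by
  have hcompl : #(univ \ U.image π) = 2 := by
    rw [card_sdiff_of_subset (subset_univ _), card_univ, card_image_of_injOn hπ]; omega
  obtain ⟨A, B, hAB, hD⟩ := card_eq_two.mp hcompl
  have hsum := sum_sdiff (f := fun m => m) (subset_univ (U.image π))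
  rw [sum_image hπ, ← map_sum, hU, map_zero, add_zero, hM] at hsum
  rw [hD, sum_pair hAB, add_eq_zero_iff_eq_neg] at hsum
  subst hsum
  exact ⟨B, hπ, hAB.symm, by rw [hD, pair_comm]⟩

lemma IsMissingPair.ne_zero (h : IsMissingPair U π A) : A ≠ 0 :=
  fun hA => h.ne_neg (by rw [hA, neg_zero])

lemma IsMissingPair.not_mem_image_iff (h : IsMissingPair U π A) {m : M} :
    m ∉ U.image π ↔ m = A ∨ m = -A := by
  have hm := congrArg (m ∈ ·) h.compl_image
  simpa only [mem_sdiff, mem_univ, true_and, mem_insert, mem_singleton, eq_iff_iff] using hm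

lemma IsMissingPair.sum_comp {R : Type*} [AddCommGroup R] (h : IsMissingPair U π A)
    (G : M → R) (hG : ∑ m, G m = 0) : ∑ u ∈ U, G (π u) = -(G A + G (-A)) := by
  rw [← sum_image h.injOn, ← sum_pair h.ne_neg, ← h.compl_image,
    eq_neg_iff_add_eq_zero, add_comm, sum_sdiff (subset_univ _), hG]

end MissingPair

def binQuad {F : Type*} [Field F] (a b c : F) (m : F × F) : F :=
  a * m.1 ^ 2 + b * (m.1 * m.2) + c * m.2 ^ 2

lemma binQuad_neg {F : Type*} [Field F] (a b c : F) (m : F × F) :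
    binQuad a b c (-m) = binQuad a b c m := by
  simp only [binQuad, Prod.fst_neg, Prod.snd_neg]; ring

section FiniteField

variable {F : Type*} [Field F] [Fintype F]

lemma sum_univ_binQuad (h2 : (2 : F) ≠ 0) (a b c : F) : ∑ m : F × F, binQuad a b c m = 0 := by
  have hF : ∑ x : F, x = 0 := sum_univ_eq_zero_of_two_ne_zero h2
  simp only [binQuad, sum_add_distrib, ← mul_sum, Fintype.sum_prod_type, ← sum_mul_sum, hF,
    sum_const, card_univ, nsmul_eq_mul, FiniteField.cast_card_eq_zero, zero_mul, mul_zero,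
    add_zero]

variable [DecidableEq F] {V : Type*} [AddCommGroup V] {U : Finset V} {π : V →+ F × F}
  {A : F × F}

lemma IsMissingPair.sum_binQuad (h2 : (2 : F) ≠ 0) (h : IsMissingPair U π A) (a b c : F) :
    ∑ u ∈ U, binQuad a b c (π u) = -2 * binQuad a b c A := by
  rw [h.sum_comp _ (sum_univ_binQuad h2 a b c), binQuad_neg]; ring

end FiniteField

section NoDetermine

variable {F : Type*} [Field F] [DecidableEq F] {U : Finset (F × F × F)}

lemma NoDetermine.injOn {M : Type*} [AddCommGroup M] (hU : NoDetermine U)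
    {π : (F × F × F) →+ M} (hπ : ∀ d, π d = 0 → quadQ d = 0) : Set.InjOn π U := by
  intro u hu u' hu' h
  by_contra hne
  exact hU u hu u' hu' hne (hπ _ (by rw [map_sub, h, sub_self]))

lemma NoDetermine.insert {z : F × F × F} (hU : NoDetermine U)
    (hz : ∀ u ∈ U, quadQ (z - u) ≠ 0) : NoDetermine (insert z U) := by
  intro a ha b hb hne
  rcases mem_insert.mp ha with rfl | ha <;> rcases mem_insert.mp hb with hb | hb
  · exact absurd hb.symm hne
  · exact hz b hb
  · rw [hb, quadQ_sub_comm]; exact hz a ha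
  · exact hU a ha b hb hne

variable [Fintype F]

lemma NoDetermine.exists_isMissingPair (h2 : (2 : F) ≠ 0) (hU : NoDetermine U)
    (hcard : #U + 2 = Fintype.card F ^ 2) (hsum : ∑ u ∈ U, u = 0) {π : (F × F × F) →+ F × F}
    (hπ : ∀ d, π d = 0 → quadQ d = 0) : ∃ A, IsMissingPair U π A :=
  IsMissingPair.exists (hU.injOn hπ) (by rw [hcard, Fintype.card_prod, sq])
    (sum_univ_eq_zero_of_two_ne_zero h2) hsum

lemma exists_extension_of_mem_missing_lines (hU : NoDetermine U) {A : F → F × F} {W : F × F}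
    (hA : ∀ s, IsMissingPair U (projFin s) (A s)) (hW : IsMissingPair U projInf W)
    {z : F × F × F} (hzW : projInf z = W ∨ projInf z = -W)
    (hzA : ∀ s, projFin s z = A s ∨ projFin s z = -A s) :
    ∃ v, v ∉ U ∧ NoDetermine (insert v U) := by
  have hzW' := hW.not_mem_image_iff.mpr hzW
  refine ⟨z, fun hz => hzW' (mem_image_of_mem _ hz), hU.insert fun u hu hq => ?_⟩
  rcases (quadQ_eq_zero_iff_proj _).mp hq with ⟨s, hs⟩ | hs
  · rw [map_sub, sub_eq_zero] at hs
    exact (hA s).not_mem_image_iff.mpr (hzA s) (hs ▸ mem_image_of_mem _ hu)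
  · rw [map_sub, sub_eq_zero] at hs
    exact hzW' (hs ▸ mem_image_of_mem _ hu)

variable {A B W : F × F}

lemma sq_fst_eq_of_isMissingPair (h2 : (2 : F) ≠ 0) {s : F}
    (hA : IsMissingPair U (projFin s) A) (hW : IsMissingPair U projInf W) :
    A.1 ^ 2 = (s * W.1 - W.2) ^ 2 := by
  have h := (hA.sum_binQuad h2 1 0 0).symm.trans <| (sum_congr rfl fun u _ => ?_).trans
    (hW.sum_binQuad h2 (s ^ 2) (-2 * s) 1)
  · simp only [binQuad] at h
    exact mul_left_cancel₀ (neg_ne_zero.mpr h2) (by linear_combination h)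
  · simp only [binQuad, projFin_apply, projInf_apply]; ring

/-- The form `r s x₀ - (r + s) x₁ + x₂` vanishes on both `(1, r, r²)` and `(1, s, s²)`; it reads
`r m₁ + m₂` through `projFin s` and `s m₁ + m₂` through `projFin r`. -/
lemma sq_pencil_eq_of_isMissingPair (h2 : (2 : F) ≠ 0) {r s : F}
    (hA : IsMissingPair U (projFin s) A) (hB : IsMissingPair U (projFin r) B) :
    (r * A.1 + A.2) ^ 2 = (s * B.1 + B.2) ^ 2 := by
  have h := (hA.sum_binQuad h2 (r ^ 2) (2 * r) 1).symm.trans <|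
    (sum_congr rfl fun u _ => ?_).trans (hB.sum_binQuad h2 (s ^ 2) (2 * s) 1)
  · simp only [binQuad] at h
    exact mul_left_cancel₀ (neg_ne_zero.mpr h2) (by linear_combination h)
  · simp only [binQuad, projFin_apply]; ring

end NoDetermine

section Configuration

variable {F : Type*} [Field F]

lemma eq_or_eq_neg_trans {M : Type*} [AddCommGroup M] {a b c : M} (hab : a = b ∨ a = -b)
    (hbc : b = c ∨ b = -c) : a = c ∨ a = -c := by
  rcases hab with rfl | rfl <;> rcases hbc with rfl | rfl <;> simp

lemma forall_eq_two_mul_or_forall_eq (h2 : (2 : F) ≠ 0) {w : F} (hw : w ≠ 0) {c : F → F}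
    (h : ∀ r s, c s = c r ∨ c s + c r = 2 * (r + s) * w) :
    (∀ s, c s = 2 * s * w) ∨ ∀ s, c s = c 0 := by
  by_cases hc : ∀ s, c s = c 0
  · exact Or.inr hc
  push Not at hc
  obtain ⟨s, hs⟩ := hc
  left
  have hadd : ∀ {a b}, c a ≠ c b → c a + c b = 2 * (b + a) * w :=
    fun hab => (h _ _).resolve_left hab
  have hne : ∀ {a b m}, c a ≠ c b → m ≠ a → c m ≠ c a := by
    intro a b m hab hma hm
    rcases eq_or_ne m b with rfl | hmb
    · exact hab hm.symm
    have hmb' := hadd (hm ▸ hab)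
    have hab' := hadd hab
    exact hma (mul_left_cancel₀ (mul_ne_zero h2 hw) (by linear_combination hm - hmb' + hab'))
  have htriple : ∀ {a b e}, c a ≠ c b → c a ≠ c e → c b ≠ c e → c a = 2 * a * w := by
    intro a b e hab hae hbe
    exact mul_left_cancel₀ h2 (by linear_combination hadd hab + hadd hae - hadd hbe)
  obtain ⟨n, hns, hn0⟩ : ∃ n : F, n ≠ s ∧ n ≠ 0 := by
    rcases eq_or_ne s 1 with rfl | hs1
    · exact ⟨-1, fun h => h2 (by linear_combination -h), neg_ne_zero.mpr one_ne_zero⟩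
    · exact ⟨1, hs1.symm, one_ne_zero⟩
  intro m
  rcases eq_or_ne m s with rfl | hms
  · exact htriple hs (hne hs hns).symm (hne hs.symm hn0).symm
  rcases eq_or_ne m 0 with rfl | hm0
  · exact htriple hs.symm (hne hs.symm hn0).symm (hne hs hns).symm
  · exact htriple (hne hs hms) (hne hs.symm hm0) hs

lemma exists_forall_eq_of_ne_zero (h2 : (2 : F) ≠ 0) {w₀ w₁ : F} (hw₀ : w₀ ≠ 0) {c : F → F}
    (h : ∀ r s, (c s + (r * s * w₀ - (r + s) * w₁)) ^ 2 = (c r + (r * s * w₀ - (r + s) * w₁)) ^ 2) :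
    ∃ c₀, ∀ s, c s = c₀ ∨ (s * w₀ = w₁ ∧ (c s - s * w₁) ^ 2 = (c₀ - s * w₁) ^ 2) := by
  set s₀ := w₁ / w₀
  have hs₀ : s₀ * w₀ = w₁ := div_mul_cancel₀ w₁ hw₀
  have hstar : ∀ s, (c s - s₀ * w₁) ^ 2 = (c s₀ - s₀ * w₁) ^ 2 := by
    intro s
    have hk : s₀ * s * w₀ - (s₀ + s) * w₁ = -(s₀ * w₁) := by linear_combination s * hs₀
    simpa only [hk, ← sub_eq_add_neg] using h s₀ s
  have hconst : ∀ r s, r * w₀ ≠ w₁ → s * w₀ ≠ w₁ → c s = c r := by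
    intro r s hr hs
    by_contra hne
    have hrs := (sq_eq_sq_iff_eq_or_eq_neg.mp (h r s)).resolve_left
      (by intro h'; apply hne; linear_combination h')
    have h₀ := (sq_eq_sq_iff_eq_or_eq_neg.mp ((hstar s).trans (hstar r).symm)).resolve_left
      (by intro h'; apply hne; linear_combination h')
    exact mul_ne_zero h2 (mul_ne_zero (sub_ne_zero.mpr hs) (sub_ne_zero.mpr hr))
      (by linear_combination w₀ * (hrs - h₀) - 2 * w₁ * hs₀)
  have hs₁ : (s₀ + 1) * w₀ ≠ w₁ := by
    rw [add_mul, hs₀, one_mul]; exact fun h => hw₀ (by linear_combination h)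
  refine ⟨c (s₀ + 1), fun s => ?_⟩
  by_cases hs : s * w₀ = w₁
  · obtain rfl : s = s₀ := eq_div_of_mul_eq hw₀ hs
    exact Or.inr ⟨hs, (hstar (s₀ + 1)).symm⟩
  · exact Or.inl (hconst (s₀ + 1) s hs₁ hs)

lemma eq_two_mul_or_exists_common_of_sq_eq (h2 : (2 : F) ≠ 0) {W : F × F} (hW : W ≠ 0)
    {c : F → F} (h : ∀ r s, (c s + (r * s * W.1 - (r + s) * W.2)) ^ 2
      = (c r + (r * s * W.1 - (r + s) * W.2)) ^ 2) :
    (W.1 = 0 ∧ ∀ s, c s = 2 * s * W.2) ∨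
      ∃ c₀, ∀ s, c s = c₀ ∨ (s * W.1 = W.2 ∧ (c s - s * W.2) ^ 2 = (c₀ - s * W.2) ^ 2) := by
  rcases eq_or_ne W.1 0 with h0 | h0
  · have hw : W.2 ≠ 0 := fun h => hW (Prod.ext h0 h)
    have h' : ∀ r s, c s = c r ∨ c s + c r = 2 * (r + s) * W.2 := by
      intro r s
      rcases sq_eq_sq_iff_eq_or_eq_neg.mp (h r s) with h | h
      · exact Or.inl (by linear_combination h)
      · exact Or.inr (by linear_combination h - 2 * r * s * h0)
    rcases forall_eq_two_mul_or_forall_eq h2 hw h' with h | h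
    · exact Or.inl ⟨h0, h⟩
    · exact Or.inr ⟨c 0, fun s => Or.inl (h s)⟩
  · exact Or.inr (exists_forall_eq_of_ne_zero h2 h0 h)

lemma exists_projFin_eq_or_eq_neg {s : F} {A W : F × F} (h : A.1 ^ 2 = (s * W.1 - W.2) ^ 2) :
    ∃ c, projFin s (W.1, W.2, c) = A ∨ projFin s (W.1, W.2, c) = -A := by
  rcases sq_eq_sq_iff_eq_or_eq_neg.mp h with h | h
  · exact ⟨s * W.2 + A.2, Or.inl (by ext <;> simp [h])⟩
  · exact ⟨s * W.2 - A.2, Or.inr (by ext <;> simp [h])⟩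

/-- The first alternative says that each missing line lies in the tangent plane of the isotropic
cone along its direction. -/
theorem tangent_or_exists_mem_missing_lines (h2 : (2 : F) ≠ 0) {A : F → F × F} {W : F × F}
    (hW : W ≠ 0) (hC1 : ∀ s, (A s).1 ^ 2 = (s * W.1 - W.2) ^ 2)
    (hC2 : ∀ r s, (r * (A s).1 + (A s).2) ^ 2 = (s * (A r).1 + (A r).2) ^ 2) :
    (W.1 = 0 ∧ ∀ s, (A s).2 + s * (A s).1 = 0) ∨
      ∃ z, (projInf z = W ∨ projInf z = -W) ∧ ∀ s, projFin s z = A s ∨ projFin s z = -A s := by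
  -- `(W.1, W.2, c s)` is the point above `W` of a missing line of direction `(1, s, s²)`
  choose c hc using fun s => exists_projFin_eq_or_eq_neg (hC1 s)
  have hpencil : ∀ r s,
      (r * (A s).1 + (A s).2) ^ 2 = (c s + (r * s * W.1 - (r + s) * W.2)) ^ 2 := by
    intro r s
    rcases hc s with h | h
    · rw [← h]; simp only [projFin_apply]; ring
    · rw [← neg_neg (A s), ← h]; simp only [projFin_apply, Prod.fst_neg, Prod.snd_neg]; ring
  have hrel : ∀ r s, (c s + (r * s * W.1 - (r + s) * W.2)) ^ 2
      = (c r + (r * s * W.1 - (r + s) * W.2)) ^ 2 := by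
    intro r s
    rw [← hpencil r s, hC2 r s, hpencil s r]; ring
  rcases eq_two_mul_or_exists_common_of_sq_eq h2 hW hrel with ⟨h0, hc2⟩ | ⟨c₀, hc₀⟩
  · refine Or.inl ⟨h0, fun s => ?_⟩
    rcases hc s with h | h <;> simp only [Prod.ext_iff, projFin_apply, Prod.fst_neg,
      Prod.snd_neg] at h
    · linear_combination -h.2 - s * h.1 + hc2 s + s ^ 2 * h0
    · linear_combination h.2 + s * h.1 - hc2 s - s ^ 2 * h0
  · refine Or.inr ⟨(W.1, W.2, c₀), Or.inl rfl, fun s => eq_or_eq_neg_trans ?_ (hc s)⟩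
    rcases hc₀ s with h | ⟨hs, hsq⟩
    · exact Or.inl (by rw [h])
    rcases sq_eq_sq_iff_eq_or_eq_neg.mp hsq with h | h
    · exact Or.inl (Prod.ext rfl (by simp only [projFin_apply]; linear_combination -h))
    · refine Or.inr (Prod.ext ?_ ?_) <;> simp only [projFin_apply, Prod.fst_neg, Prod.snd_neg]
      · linear_combination 2 * hs
      · linear_combination h

end Configuration

lemma Multiset.two_mul_esymm_two {R : Type*} [CommRing R] (s : Multiset R) :
    2 * s.esymm 2 = s.sum ^ 2 - (s.map (· ^ 2)).sum := by
  induction s using Multiset.induction with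
  | empty => simp [Multiset.esymm, Multiset.powersetCard_zero_right]
  | cons a s ih =>
    have hcons : (a ::ₘ s).esymm 2 = a * s.esymm 1 + s.esymm 2 := by
      simp only [Multiset.esymm, Multiset.powersetCard_cons, Multiset.map_add,
        Multiset.sum_add, Multiset.map_map, Function.comp_def, Multiset.prod_cons,
        Multiset.sum_map_mul_left, add_comm]
    have hone : s.esymm 1 = s.sum := by
      simp [Multiset.esymm, Multiset.powersetCard_one, Multiset.map_map]
    rw [hcons, hone, Multiset.sum_cons, Multiset.map_cons, Multiset.sum_cons, mul_add, ih]
    ring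

section Moments

variable {F : Type*} [Field F] [Fintype F] [DecidableEq F] {U : Finset (F × F × F)}
  {A : F → F × F} {W : F × F}

lemma sum_sq_dot3_eq (h2 : (2 : F) ≠ 0) (hA : ∀ s, IsMissingPair U (projFin s) (A s))
    (hW : IsMissingPair U projInf W) (hW1 : W.1 = 0) (htan : ∀ s, (A s).2 + s * (A s).1 = 0)
    (v : F × F × F) :
    ∑ u ∈ U, dot3 u v ^ 2 = -2 * W.2 ^ 2 * discrim v.2.2 v.2.1 v.1 := by
  -- `u₀², u₀u₁, u₁²` factor through `projInf`, `u₁u₂, u₂²` through `projFin 0`, and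
  -- `u₀u₂ = (u₀ - u₁)(u₂ - u₁) + u₀u₁ + u₁u₂ - u₁²` uses `projFin 1`.
  have hdecomp : ∀ u, dot3 u v ^ 2 =
      binQuad (v.1 ^ 2) (2 * v.1 * (v.2.1 + v.2.2)) (v.2.1 ^ 2 - 2 * v.1 * v.2.2) (projInf u)
        + binQuad 0 (-2 * v.2.2 * (v.2.1 + v.1)) (v.2.2 ^ 2) (projFin 0 u)
        + binQuad 0 (2 * v.1 * v.2.2) 0 (projFin 1 u) := by
    intro u; simp only [dot3, binQuad, projInf_apply, projFin_apply]; ring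
  have hC := sq_fst_eq_of_isMissingPair h2 (hA 1) hW
  rw [sum_congr rfl fun u _ => hdecomp u, sum_add_distrib, sum_add_distrib, hW.sum_binQuad h2,
    (hA 0).sum_binQuad h2, (hA 1).sum_binQuad h2]
  simp only [binQuad, discrim]
  linear_combination (-2 * v.1 ^ 2 * W.1 - 4 * v.1 * (v.2.1 + v.2.2) * W.2
      + 4 * v.1 * v.2.2 * (W.1 - 2 * W.2)) * hW1
    + (4 * v.2.2 * (v.2.1 + v.1) * (A 0).1 - 2 * v.2.2 ^ 2 * (A 0).2) * htan 0
    - 4 * v.1 * v.2.2 * (A 1).1 * htan 1 + 4 * v.1 * v.2.2 * hC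

theorem sigmaU_two_eq (h2 : (2 : F) ≠ 0) (hsum : ∑ u ∈ U, u = 0)
    (hA : ∀ s, IsMissingPair U (projFin s) (A s)) (hW : IsMissingPair U projInf W)
    (hW1 : W.1 = 0) (htan : ∀ s, (A s).2 + s * (A s).1 = 0) (v : F × F × F) :
    sigmaU U v 2 = W.2 ^ 2 * discrim v.2.2 v.2.1 v.1 := by
  refine mul_left_cancel₀ h2 ?_
  rw [sigmaU, Multiset.two_mul_esymm_two, Multiset.map_map]
  change (∑ u ∈ U, dot3 u v) ^ 2 - ∑ u ∈ U, dot3 u v ^ 2 = _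
  rw [sum_dot3_left, hsum, sum_sq_dot3_eq h2 hA hW hW1 htan]
  simp [dot3]
  ring

end Moments

theorem stmt_16_general {p : ℕ} (hodd : Odd p)
    {F : Type*} [Field F] [Fintype F] [DecidableEq F]
    (hcard : Fintype.card F = p)
    (U : Finset (F × F × F))
    (hUcard : U.card = p ^ 2 - 2)
    (hU : NoDetermine U)
    (hmax : ¬ ∃ v : F × F × F, v ∉ U ∧ NoDetermine (insert v U))
    (hsum : ∑ u ∈ U, u = 0) :
    ∀ v : F × F × F, v ≠ 0 → (sigmaU U v 2 = 0 ↔ TangentToConic v) := by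
  intro v hv
  have h2 : (2 : F) ≠ 0 := Ring.two_ne_zero fun h => by
    have h' := FiniteField.even_card_iff_char_two.mp h
    rw [hcard, ← Nat.even_iff] at h'
    exact Nat.not_even_iff_odd.mpr hodd h'
  have hcardU : #U + 2 = Fintype.card F ^ 2 := by
    have h1 : 1 < p := hcard ▸ Fintype.one_lt_card
    rw [hUcard, hcard, Nat.sub_add_cancel (by nlinarith)]
  obtain ⟨W, hW⟩ := hU.exists_isMissingPair h2 hcardU hsum (π := projInf)
    fun d hd => (quadQ_eq_zero_iff_proj d).mpr (Or.inr hd)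
  choose A hA using fun s => hU.exists_isMissingPair h2 hcardU hsum (π := projFin s)
    fun d hd => (quadQ_eq_zero_iff_proj d).mpr (Or.inl ⟨s, hd⟩)
  obtain ⟨hW1, htan⟩ := (tangent_or_exists_mem_missing_lines h2 hW.ne_zero
    (fun s => sq_fst_eq_of_isMissingPair h2 (hA s) hW)
    (fun r s => sq_pencil_eq_of_isMissingPair h2 (hA s) (hA r))).resolve_right
    fun ⟨_, hzW, hzA⟩ => hmax (exists_extension_of_mem_missing_lines hU hA hW hzW hzA)
  have hW2 : W.2 ≠ 0 := fun h => hW.ne_zero (Prod.ext hW1 h)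
  rw [sigmaU_two_eq h2 hsum hA hW hW1 htan, tangentToConic_iff_discrim_eq_zero h2 hv,
    mul_eq_zero, or_iff_right (pow_ne_zero 2 hW2)]

theorem stmt_16 {p : ℕ} (hp : p.Prime) (hodd : Odd p)
    {F : Type*} [Field F] [Fintype F] [DecidableEq F]
    (hcard : Fintype.card F = p)
    (U : Finset (F × F × F))
    (hUcard : U.card = p ^ 2 - 2)
    (hU : NoDetermine U)
    (hmax : ¬ ∃ v : F × F × F, v ∉ U ∧ NoDetermine (insert v U))
    (hsum : ∑ u ∈ U, u = 0) :
    ∀ v : F × F × F, v ≠ 0 → (sigmaU U v 2 = 0 ↔ TangentToConic v) :=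
  stmt_16_general hodd hcard U hUcard hU hmax hsum
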